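/- arXiv:2211.09686 — 7 statements merged into one kernel-verified Lean document; each statement's English description precedes it below -/
import Mathlib

section
/- Let X be a pseudometric space with distance d (modelling the distinguishing advantage between cryptographic resources). Let π, π′, σ, σ′ : X → X be maps such that π′ and σ are nonexpansive (1-Lipschitz for d) and commute, i.e. π′(σ(x)) = σ(π′(x)) for all x ∈ X. Let R♯, S◊, T□, R, S, T ∈ X and let ε, ε′, δ, δ′ ≥ 0 be reals. If d(π(R♯), S◊) ≤ ε, d(π′(S◊), T□) ≤ ε′, d(π(R), σ(S)) ≤ δ, and d(π′(S), σ′(T)) ≤ δ′, then the serial composition satisfies d(π′(π(R♯)), T□) ≤ ε + ε′ and d(π′(π(R)), σ(σ′(T))) ≤ δ + δ′. -/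
/-- Serial composition theorem for (ε,δ)-cryptographic security in the
Abstract Cryptography framework, stated abstractly for a pseudometric space. -/
theorem serial_composition_security {X : Type*} [PseudoMetricSpace X]
    (π π' σ σ' : X → X)
    (hπ' : LipschitzWith 1 π') (hσ : LipschitzWith 1 σ)
    (hcomm : ∀ x, π' (σ x) = σ (π' x))
    (Rs Sd Tsq R S T : X) (ε ε' δ δ' : ℝ)
    (hε : 0 ≤ ε) (hε' : 0 ≤ ε') (hδ : 0 ≤ δ) (hδ' : 0 ≤ δ')
    (h1 : dist (π Rs) Sd ≤ ε) (h2 : dist (π' Sd) Tsq ≤ ε')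
    (h3 : dist (π R) (σ S) ≤ δ) (h4 : dist (π' S) (σ' T) ≤ δ') :
    dist (π' (π Rs)) Tsq ≤ ε + ε' ∧ dist (π' (π R)) (σ (σ' T)) ≤ δ + δ' := by
  have L1 : dist (π' (π Rs)) (π' Sd) ≤ ε := by
    have := hπ'.dist_le_mul (π Rs) Sd
    simpa using this.trans (by simpa using h1)
  have L2 : dist (π' (π R)) (π' (σ S)) ≤ δ := by
    have := hπ'.dist_le_mul (π R) (σ S)
    simpa using this.trans (by simpa using h3)
  have L3 : dist (σ (π' S)) (σ (σ' T)) ≤ δ' := by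
    have := hσ.dist_le_mul (π' S) (σ' T)
    simpa using this.trans (by simpa using h4)
  constructor
  · calc dist (π' (π Rs)) Tsq ≤ dist (π' (π Rs)) (π' Sd) + dist (π' Sd) Tsq :=
          dist_triangle _ _ _
      _ ≤ ε + ε' := add_le_add L1 h2
  · calc dist (π' (π R)) (σ (σ' T))
        ≤ dist (π' (π R)) (π' (σ S)) + dist (π' (σ S)) (σ (σ' T)) := dist_triangle _ _ _
      _ = dist (π' (π R)) (π' (σ S)) + dist (σ (π' S)) (σ (σ' T)) := by rw [hcomm]
      _ ≤ δ + δ' := add_le_add L2 L3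
end

section
/- Let A be a finite set and B ⊆ A a subset. Let k be an integer with 0 < k < |A| and let γ be a real with 0 < γ ≤ 1. Then the number of k-element subsets S of A satisfying |S ∩ B| < (1 − γ)·(|B|/|A|)·k, divided by the total number C(|A|, k) of k-element subsets of A, is strictly less than exp(−γ² · (|B|/|A|) · (k/2)). -/
/-!
Chernoff's method: with `p = |B| / |A|` and `z = exp (-γ)`, Markov's inequality bounds the
number of bad `k`-subsets `S` by `z ^ (-(1 - γ) p k) * ∑ S, z ^ #(S ∩ B)`. Sampling without
replacement is no worse than sampling with replacement here (Hoeffding): for `0 ≤ z ≤ 1` the sum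
is at most `C(|A|, k) (1 - p (1 - z)) ^ k ≤ C(|A|, k) exp (-p k (1 - z))`, as an induction on
`A \ B` using Pascal's rule and Bernoulli's inequality shows. The elementary bound
`exp (-γ) ≤ 1 - γ + γ ^ 2 / 2` then gives the exponent `-γ ^ 2 p k / 2`.
-/

open Finset Real

theorem Real.exp_neg_le_one_sub_add_sq_div_two {x : ℝ} (hx : 0 ≤ x) :
    exp (-x) ≤ 1 - x + x ^ 2 / 2 := by
  let f : ℝ → ℝ := fun y => 1 - y + y ^ 2 / 2 - exp (-y)
  have hf : ∀ y, HasDerivAt f (y - 1 + exp (-y)) y := fun y =>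
    ((((hasDerivAt_id y).const_sub 1).add ((hasDerivAt_pow 2 y).div_const 2)).sub
      (hasDerivAt_neg y).exp).congr_deriv (by simp; ring)
  have hmono : MonotoneOn f (Set.Ici 0) := by
    refine monotoneOn_of_deriv_nonneg (convex_Ici 0)
      (fun y _ => (hf y).continuousAt.continuousWithinAt)
      (fun y _ => (hf y).differentiableAt.differentiableWithinAt) fun y _ => ?_
    rw [(hf y).deriv]
    linarith [one_sub_le_exp_neg y]
  have := hmono Set.self_mem_Ici hx hx
  simp only [f, neg_zero, exp_zero] at this
  linarith

-- In the induction below, `u` and `v` are `1 - p (1 - z)` before and after adding a point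
-- of `A \ B`.
theorem choose_mul_pow_add_choose_mul_pow_le {n k : ℕ} {u v : ℝ} (hu : 0 ≤ u) (huv : u ≤ v)
    (h : (n + 1) * (v - u) = 1 - u) :
    n.choose (k + 1) * u ^ (k + 1) + n.choose k * u ^ k ≤
      (n + 1).choose (k + 1) * v ^ (k + 1) := by
  have hbernoulli : u ^ (k + 1) + (k + 1 : ℕ) * u ^ k * (v - u) ≤ v ^ (k + 1) := by
    simpa using pow_add_mul_le_add_pow hu (by linarith) (k + 1) (b := v - u)
  have hpascal : ((n + 1).choose (k + 1) : ℝ) = n.choose k + n.choose (k + 1) := by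
    exact_mod_cast Nat.choose_succ_succ' n k
  have habsorb : ((n + 1).choose (k + 1) : ℝ) * (k + 1 : ℕ) = (n + 1) * n.choose k := by
    exact_mod_cast (Nat.add_one_mul_choose_eq n k).symm
  calc (n.choose (k + 1) : ℝ) * u ^ (k + 1) + n.choose k * u ^ k
      = (n + 1).choose (k + 1) * (u ^ (k + 1) + (k + 1 : ℕ) * u ^ k * (v - u)) := by
        linear_combination (-(u ^ (k + 1))) * hpascal - (u ^ k * (v - u)) * habsorb
          - (n.choose k * u ^ k) * h
    _ ≤ _ := by gcongr

namespace Finset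

theorem sum_powersetCard_succ_insert {α M : Type*} [DecidableEq α] [AddCommMonoid M] {x : α}
    {s : Finset α} (hx : x ∉ s) (k : ℕ) (f : Finset α → M) :
    ∑ t ∈ (insert x s).powersetCard (k + 1), f t =
      ∑ t ∈ s.powersetCard (k + 1), f t + ∑ t ∈ s.powersetCard k, f (insert x t) := by
  rw [powersetCard_succ_insert hx, sum_union, sum_image]
  · intro t ht t' ht' h
    rw [← erase_insert (notMem_mono (mem_powersetCard.1 ht).1 hx), h,
      erase_insert (notMem_mono (mem_powersetCard.1 ht').1 hx)]
  · rw [disjoint_left]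
    intro t ht ht'
    obtain ⟨t', -, rfl⟩ := mem_image.1 ht'
    exact hx ((mem_powersetCard.1 ht).1 (mem_insert_self x t'))

theorem sum_powersetCard_pow_card_inter_le_of_disjoint {α : Type*} [DecidableEq α]
    {B C : Finset α} (hBC : Disjoint B C) {z : ℝ} (hz0 : 0 ≤ z) (hz1 : z ≤ 1) (k : ℕ) :
    ∑ S ∈ (B ∪ C).powersetCard k, z ^ #(S ∩ B) ≤
      (#(B ∪ C)).choose k * (1 - #B / #(B ∪ C) * (1 - z)) ^ k := by
  induction C using Finset.induction_on generalizing k with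
  | empty =>
    rw [union_empty, sum_congr rfl fun S hS => by rw [inter_eq_left.2 (mem_powersetCard.1 hS).1],
      sum_powersetCard, nsmul_eq_mul]
    rcases (#B).eq_zero_or_pos with hB | hB
    · cases k <;> simp [hB]
    · rw [div_self (by positivity)]
      simp
  | insert x C hxC ih =>
    have hxB : x ∉ B := disjoint_right.1 hBC (mem_insert_self x C)
    have hxBC : x ∉ B ∪ C := by simp [hxB, hxC]
    have hB : #B ≤ #(B ∪ C) := card_le_card subset_union_left
    specialize ih (hBC.mono_right (subset_insert x C))
    rw [union_insert, card_insert_of_notMem hxBC]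
    cases k with
    | zero => simp
    | succ k =>
      rw [sum_powersetCard_succ_insert hxBC]
      simp_rw [insert_inter_of_notMem hxB]
      refine (add_le_add (ih (k + 1)) (ih k)).trans ?_
      push_cast
      set n := #(B ∪ C)
      rcases n.eq_zero_or_pos with hn | hn
      · have hB0 : (#B : ℝ) = 0 := by exact_mod_cast Nat.le_zero.1 (hn ▸ hB)
        exact choose_mul_pow_add_choose_mul_pow_le (by simp [hB0]) (by simp [hB0]) (by simp [hB0])
      have hp : (#B : ℝ) / n ≤ 1 := div_le_one_of_le₀ (by exact_mod_cast hB) (by positivity)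
      apply choose_mul_pow_add_choose_mul_pow_le
      · nlinarith
      · gcongr
        linarith
      · field_simp
        ring

theorem sum_powersetCard_pow_card_inter_le {α : Type*} [DecidableEq α] {A B : Finset α}
    (hBA : B ⊆ A) {z : ℝ} (hz0 : 0 ≤ z) (hz1 : z ≤ 1) (k : ℕ) :
    ∑ S ∈ A.powersetCard k, z ^ #(S ∩ B) ≤ (#A).choose k * (1 - #B / #A * (1 - z)) ^ k := by
  simpa only [union_sdiff_of_subset hBA] using
    sum_powersetCard_pow_card_inter_le_of_disjoint (disjoint_sdiff : Disjoint B (A \ B)) hz0 hz1 k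

theorem sum_powersetCard_exp_neg_mul_card_inter_le {α : Type*} [DecidableEq α] {A B : Finset α}
    (hBA : B ⊆ A) {γ : ℝ} (hγ : 0 ≤ γ) (k : ℕ) :
    ∑ S ∈ A.powersetCard k, exp (-(γ * #(S ∩ B))) ≤
      (#A).choose k * exp (-(k * (#B / #A * (1 - exp (-γ))))) := by
  have hp : (#B : ℝ) / #A ≤ 1 :=
    div_le_one_of_le₀ (by exact_mod_cast card_le_card hBA) (by positivity)
  calc ∑ S ∈ A.powersetCard k, exp (-(γ * #(S ∩ B)))
      = ∑ S ∈ A.powersetCard k, exp (-γ) ^ #(S ∩ B) :=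
        sum_congr rfl fun S _ => by rw [← exp_nat_mul]; ring_nf
    _ ≤ (#A).choose k * (1 - #B / #A * (1 - exp (-γ))) ^ k :=
        sum_powersetCard_pow_card_inter_le hBA (exp_pos _).le (exp_le_one_iff.2 (by linarith)) k
    _ ≤ (#A).choose k * exp (-(#B / #A * (1 - exp (-γ)))) ^ k := by
        gcongr
        · nlinarith [exp_pos (-γ), exp_le_one_iff.2 (neg_nonpos.2 hγ)]
        · exact one_sub_le_exp_neg _
    _ = (#A).choose k * exp (-(k * (#B / #A * (1 - exp (-γ))))) := by
        rw [← exp_nat_mul]; ring_nf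

theorem card_filter_lt_mul_exp_lt_sum {ι : Type*} {s : Finset ι} {f : ι → ℝ} {t γ : ℝ}
    (hγ : 0 < γ) (h : (s.filter (f · < t)).Nonempty) :
    #(s.filter (f · < t)) * exp (-(γ * t)) < ∑ i ∈ s, exp (-(γ * f i)) :=
  calc #(s.filter (f · < t)) * exp (-(γ * t))
      = ∑ i ∈ s.filter (f · < t), exp (-(γ * t)) := by rw [sum_const, nsmul_eq_mul]
    _ < ∑ i ∈ s.filter (f · < t), exp (-(γ * f i)) :=
        sum_lt_sum_of_nonempty h fun i hi => by
          gcongr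
          exact (mem_filter.1 hi).2
    _ ≤ ∑ i ∈ s, exp (-(γ * f i)) :=
        sum_le_sum_of_subset_of_nonneg (filter_subset _ _) fun _ _ _ => (exp_pos _).le

end Finset

theorem hypergeometric_lower_tail_general {V : Type*} [DecidableEq V]
    (A B : Finset V) (hBA : B ⊆ A) (k : ℕ)
    (γ : ℝ) (hγ0 : 0 < γ) :
    (((A.powersetCard k).filter
        (fun S => ((S ∩ B).card : ℝ) < (1 - γ) * ((B.card : ℝ) / A.card) * k)).card : ℝ)
        / (A.card.choose k : ℝ)
      < Real.exp (-(γ ^ 2 * ((B.card : ℝ) / A.card) * (k / 2))) := by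
  set p : ℝ := (B.card : ℝ) / A.card
  set t : ℝ := (1 - γ) * p * k
  set F := (A.powersetCard k).filter (fun S => ((S ∩ B).card : ℝ) < t)
  rcases F.eq_empty_or_nonempty with hF | hF
  · simp [hF, exp_pos]
  have hchoose : (0 : ℝ) < A.card.choose k := by
    rw [← card_powersetCard]
    exact_mod_cast (hF.mono (filter_subset _ _)).card_pos
  have hmgf := sum_powersetCard_exp_neg_mul_card_inter_le hBA hγ0.le k
  have hexponent : γ * t - k * (p * (1 - exp (-γ))) ≤ -(γ ^ 2 * p * (k / 2)) := by
    nlinarith [mul_le_mul_of_nonneg_left (exp_neg_le_one_sub_add_sq_div_two hγ0.le)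
      (mul_nonneg (by positivity : 0 ≤ p) k.cast_nonneg)]
  rw [div_lt_iff₀ hchoose]
  calc (F.card : ℝ) = F.card * exp (-(γ * t)) * exp (γ * t) := by
        rw [mul_assoc, ← exp_add, neg_add_cancel, exp_zero, mul_one]
    _ < A.card.choose k * exp (-(k * (p * (1 - exp (-γ))))) * exp (γ * t) :=
        mul_lt_mul_of_pos_right ((card_filter_lt_mul_exp_lt_sum hγ0 hF).trans_le hmgf)
          (exp_pos _)
    _ ≤ _ := by
        rw [mul_assoc, ← exp_add, mul_comm]
        gcongr
        linarith

/-- Chernoff-type sampling bound for sampling without replacement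
(hypergeometric lower-tail bound), after Goldberg–Jerrum:
a uniformly random `k`-element subset `S` of `A` is unlikely to contain a
much smaller fraction of the sub-population `B` than `|B|/|A|`. -/
theorem hypergeometric_lower_tail {V : Type*} [DecidableEq V]
    (A B : Finset V) (hBA : B ⊆ A) (k : ℕ) (hk0 : 0 < k) (hk : k < A.card)
    (γ : ℝ) (hγ0 : 0 < γ) (hγ1 : γ ≤ 1) :
    (((A.powersetCard k).filter
        (fun S => ((S ∩ B).card : ℝ) < (1 - γ) * ((B.card : ℝ) / A.card) * k)).card : ℝ)
        / (A.card.choose k : ℝ)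
      < Real.exp (-(γ ^ 2 * ((B.card : ℝ) / A.card) * (k / 2))) :=
  hypergeometric_lower_tail_general A B hBA k γ hγ0
end

section
/- Let n ≥ 1 be a natural number, let A be a finite set of size 3n and B ⊆ A a subset of size 2n. Let r ≥ 1 and ω be integers with 3r/2 < ω ≤ 3n. Then the number of ω-element subsets S of A with |S ∩ B| < r, divided by C(3n, ω), is strictly less than exp(−(ω/3)·(1 − 3r/(2ω))²). -/
/-!
Let `D = A \ B` be the `n` data positions and `m = ω - r + 1`; hitting fewer than `r` traps means
`m ≤ |S ∩ D|`. This is a Chernoff bound for the hypergeometric count `|S ∩ D|`, whose mean is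
`μ = ω / 3`. Its binomial moments are `∑_S C(|S ∩ D|, j) = C(n, j) C(3n - j, ω - j)
≤ C(3n, ω) C(ω, j) 3⁻ʲ`, so `∑_S y ^ |S ∩ D|` is at most `C(3n, ω)` times the moment generating
function of `Bin(ω, 1/3)`. Markov's inequality at `y = m / μ`, together with
`log t ≥ 2 (t - 1) / (t + 1)`, bounds the proportion by `exp (-(m - μ)² / (m + μ))`, and an
elementary estimate compares this exponent with the claimed one.
-/

open Finset

theorem Nat.pow_mul_choose_le {d N : ℕ} (h : d ≤ N) (j : ℕ) :
    N ^ j * d.choose j ≤ d ^ j * N.choose j := by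
  have hdesc : N ^ j * d.descFactorial j ≤ d ^ j * N.descFactorial j := by
    induction j with
    | zero => simp
    | succ k ih =>
      have hk : N * (d - k) ≤ d * (N - k) := by
        rw [Nat.mul_sub, Nat.mul_sub, mul_comm N d]
        exact Nat.sub_le_sub_left (Nat.mul_le_mul_right k h) _
      calc N ^ (k + 1) * d.descFactorial (k + 1)
          = (N * (d - k)) * (N ^ k * d.descFactorial k) := by
            rw [Nat.descFactorial_succ, pow_succ]; ring
        _ ≤ (d * (N - k)) * (d ^ k * N.descFactorial k) := Nat.mul_le_mul hk ih
        _ = d ^ (k + 1) * N.descFactorial (k + 1) := by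
            rw [Nat.descFactorial_succ, pow_succ]; ring
  simp only [Nat.descFactorial_eq_factorial_mul_choose, mul_left_comm _ j.factorial] at hdesc
  exact Nat.le_of_mul_le_mul_left hdesc j.factorial_pos

theorem Nat.choose_le_choose_mul_div_pow {d N : ℕ} (h : d ≤ N) (j : ℕ) :
    (d.choose j : ℝ) ≤ N.choose j * ((d : ℝ) / N) ^ j := by
  rcases Nat.eq_zero_or_pos N with rfl | hN
  · obtain rfl : d = 0 := Nat.le_zero.mp h
    cases j <;> simp
  have hpow : (N : ℝ) ^ j * d.choose j ≤ d ^ j * N.choose j := by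
    exact_mod_cast Nat.pow_mul_choose_le h j
  rw [div_pow, mul_div_assoc', le_div_iff₀ (by positivity)]
  linarith

theorem add_one_pow_eq_sum_range_choose {x : ℝ} {k ω : ℕ} (hk : k ≤ ω) :
    (x + 1) ^ k = ∑ j ∈ range (ω + 1), x ^ j * k.choose j := by
  rw [add_pow]
  refine (sum_congr rfl fun j _ => by rw [one_pow, mul_one]).trans
    (sum_subset (range_subset_range.mpr (by omega)) fun j _ hj => ?_)
  rw [mem_range, not_lt] at hj
  simp [Nat.choose_eq_zero_of_lt (Nat.lt_of_succ_le hj)]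

theorem Real.exp_sub_div_div_pow_le {μ : ℝ} {m : ℕ} (hμ : 0 < μ) (hm : μ ≤ m) :
    Real.exp (m - μ) / (m / μ) ^ m ≤ Real.exp (-((m - μ) ^ 2 / (m + μ))) := by
  have hm0 : (0 : ℝ) < m := hμ.trans_le hm
  have hsum : (0 : ℝ) < m + μ := by positivity
  have hlog : 2 * (m - μ) / (m + μ) ≤ Real.log (m / μ) := by
    have h := Real.le_log_one_add_of_nonneg (x := m / μ - 1)
      (by rw [sub_nonneg, le_div_iff₀ hμ]; linarith)
    rw [add_sub_cancel] at h
    convert h using 1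
    rw [div_sub_one hμ.ne', div_add' _ _ _ hμ.ne', mul_div_assoc',
      div_div_div_cancel_right₀ hμ.ne']
    ring
  rw [← Real.exp_log (div_pos hm0 hμ), ← Real.exp_nat_mul, ← Real.exp_sub, Real.exp_le_exp]
  have hkey : (m:ℝ) * (2 * (m - μ) / (m + μ)) ≤ m * Real.log (m / μ) :=
    mul_le_mul_of_nonneg_left hlog hm0.le
  have hid : (m:ℝ) - μ - m * (2 * (m - μ) / (m + μ)) = -((m - μ) ^ 2 / (m + μ)) := by
    field_simp
    ring
  linarith

namespace Finset

variable {α : Type*} [DecidableEq α]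

theorem sum_choose_card_inter_powersetCard {A D : Finset α} (hD : D ⊆ A) {ω j : ℕ}
    (hj : j ≤ ω) :
    ∑ S ∈ A.powersetCard ω, (#(S ∩ D)).choose j = (#D).choose j * (#A - j).choose (ω - j) := by
  have hcount := sum_card_bipartiteAbove_eq_sum_card_bipartiteBelow
    (s := A.powersetCard ω) (t := D.powersetCard j) (r := fun S T => T ⊆ S)
  have habove : ∀ S, #((D.powersetCard j).bipartiteAbove (fun S T => T ⊆ S) S)
      = (#(S ∩ D)).choose j := by
    intro S
    rw [← card_powersetCard, bipartiteAbove]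
    congr 1
    ext T
    simp only [mem_filter, mem_powersetCard, subset_inter_iff]
    tauto
  have hbelow : ∀ T ∈ D.powersetCard j,
      #((A.powersetCard ω).bipartiteBelow (fun S T => T ⊆ S) T) = (#A - j).choose (ω - j) := by
    intro T hT
    rw [mem_powersetCard] at hT
    rw [bipartiteBelow, card_filter_powersetCard_subset T A ω (hT.1.trans hD) (hT.2 ▸ hj), hT.2]
  simp only [habove] at hcount
  rw [hcount, sum_congr rfl hbelow, sum_const, card_powersetCard, smul_eq_mul]

theorem sum_pow_card_inter_powersetCard_le {A D : Finset α} (hD : D ⊆ A) (ω : ℕ) {y : ℝ}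
    (hy : 1 ≤ y) :
    ∑ S ∈ A.powersetCard ω, y ^ #(S ∩ D)
      ≤ (#A).choose ω * ((y - 1) * (#D / #A) + 1) ^ ω := by
  set p : ℝ := #D / #A
  calc ∑ S ∈ A.powersetCard ω, y ^ #(S ∩ D)
      = ∑ S ∈ A.powersetCard ω, ∑ j ∈ range (ω + 1), (y - 1) ^ j * (#(S ∩ D)).choose j := by
        refine sum_congr rfl fun S hS => ?_
        rw [← add_one_pow_eq_sum_range_choose, sub_add_cancel]
        exact (card_le_card inter_subset_left).trans (mem_powersetCard.mp hS).2.le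
    _ = ∑ j ∈ range (ω + 1), (y - 1) ^ j * ((#D).choose j * (#A - j).choose (ω - j) : ℕ) := by
        rw [sum_comm]
        refine sum_congr rfl fun j hj => ?_
        rw [← sum_choose_card_inter_powersetCard hD (Nat.lt_succ_iff.mp (mem_range.mp hj)),
          Nat.cast_sum, mul_sum]
    _ ≤ ∑ j ∈ range (ω + 1), (y - 1) ^ j * ((#A).choose ω * ω.choose j * p ^ j) := by
        refine sum_le_sum fun j hj => mul_le_mul_of_nonneg_left ?_ (by positivity)
        have hmul :
            ((#A).choose ω * ω.choose j : ℝ) = (#A).choose j * (#A - j).choose (ω - j) := by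
          exact_mod_cast Nat.choose_mul (Nat.lt_succ_iff.mp (mem_range.mp hj))
        rw [hmul, Nat.cast_mul, mul_right_comm]
        exact mul_le_mul_of_nonneg_right (Nat.choose_le_choose_mul_div_pow (card_le_card hD) j)
          (by positivity)
    _ = (#A).choose ω * ((y - 1) * p + 1) ^ ω := by
        rw [add_pow, mul_sum]
        refine sum_congr rfl fun j _ => ?_
        rw [one_pow, mul_one, mul_pow]
        ring

theorem card_filter_le_mul_pow_le_sum {ι : Type*} (s : Finset ι) (f : ι → ℕ) (m : ℕ) {y : ℝ}
    (hy : 1 ≤ y) :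
    #{x ∈ s | m ≤ f x} * y ^ m ≤ ∑ x ∈ s, y ^ f x := by
  rw [← nsmul_eq_mul]
  refine (card_nsmul_le_sum _ _ _ fun x hx => pow_le_pow_right₀ hy (mem_filter.mp hx).2).trans ?_
  exact sum_le_sum_of_subset_of_nonneg (filter_subset _ _) fun x _ _ => by positivity

theorem card_powersetCard_filter_le_card_inter_le {A D : Finset α} (hD : D ⊆ A) {ω m : ℕ}
    (hμ : 0 < (ω : ℝ) * #D / #A) (hm : (ω : ℝ) * #D / #A ≤ m) :
    (#{S ∈ A.powersetCard ω | m ≤ #(S ∩ D)} : ℝ)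
      ≤ (#A).choose ω * Real.exp (-((m - ω * #D / #A) ^ 2 / (m + ω * #D / #A))) := by
  set μ : ℝ := ω * #D / #A
  have hy : 1 ≤ m / μ := by rwa [one_le_div hμ]
  have hmgf : ((m / μ - 1) * (#D / #A) + 1) ^ ω ≤ Real.exp (m - μ) := by
    have hexp : (ω : ℝ) * ((m / μ - 1) * (#D / #A)) = m - μ := by
      rw [show (ω : ℝ) * ((m / μ - 1) * (#D / #A)) = (m / μ - 1) * μ by ring, sub_one_mul,
        div_mul_cancel₀ _ hμ.ne']
    rw [← hexp, Real.exp_nat_mul]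
    exact pow_le_pow_left₀ (by positivity) (Real.add_one_le_exp _) ω
  have hcount := (card_filter_le_mul_pow_le_sum _ (fun S => #(S ∩ D)) m hy).trans
    ((sum_pow_card_inter_powersetCard_le hD ω hy).trans
      (mul_le_mul_of_nonneg_left hmgf (Nat.cast_nonneg _)))
  rw [← le_div_iff₀ (by positivity), mul_div_assoc] at hcount
  exact hcount.trans (mul_le_mul_of_nonneg_left (Real.exp_sub_div_div_pow_le hμ hm)
    (Nat.cast_nonneg _))

end Finset

theorem threshold_exponent_lt {r ω : ℝ} (hr : 0 ≤ r) (hω : 3 * r / 2 < ω) :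
    ω / 3 * (1 - 3 * r / (2 * ω)) ^ 2 < (ω - r + 1 - ω / 3) ^ 2 / (ω - r + 1 + ω / 3) := by
  have hω0 : 0 < ω := by linarith
  have hden : 0 < ω - r + 1 + ω / 3 := by linarith
  rw [lt_div_iff₀ hden]
  field_simp
  nlinarith [mul_pos hω0 hω0, mul_nonneg hr hω0.le, mul_nonneg (mul_nonneg hr hr) hω0.le]

theorem threshold_trap_detection_general {V : Type*} [DecidableEq V] (n : ℕ)
    (A B : Finset V) (hA : A.card = 3 * n) (hBA : B ⊆ A) (hB : B.card = 2 * n)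
    (r ω : ℕ) (hω1 : (3 * r : ℝ) / 2 < (ω : ℝ)) (hω2 : ω ≤ 3 * n) :
    (((A.powersetCard ω).filter (fun S => (S ∩ B).card < r)).card : ℝ)
        / ((3 * n).choose ω : ℝ)
      < Real.exp (-((ω : ℝ) / 3 * (1 - 3 * r / (2 * ω)) ^ 2)) := by
  have hrω : r < ω := by
    exact_mod_cast (by linarith [(r.cast_nonneg : (0 : ℝ) ≤ r)] : (r : ℝ) < ω)
  have hω0 : 0 < ω := by omega
  have hC : (0 : ℝ) < (3 * n).choose ω := by exact_mod_cast Nat.choose_pos hω2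
  have hμ : (ω : ℝ) * #(A \ B) / #A = ω / 3 := by
    rw [card_sdiff_of_subset hBA, hA, hB, show 3 * n - 2 * n = n by omega]
    push_cast
    field_simp [show (n : ℝ) ≠ 0 by exact_mod_cast (show n ≠ 0 by omega)]
  have hm : ((ω - r + 1 : ℕ) : ℝ) = ω - r + 1 := by push_cast [Nat.cast_sub hrω.le]; ring
  have hsub : {S ∈ A.powersetCard ω | #(S ∩ B) < r}
      ⊆ {S ∈ A.powersetCard ω | ω - r + 1 ≤ #(S ∩ (A \ B))} := by
    intro S
    simp only [mem_filter, mem_powersetCard]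
    rintro ⟨⟨hSA, hSω⟩, hSB⟩
    refine ⟨⟨hSA, hSω⟩, ?_⟩
    have hdata : S ∩ (A \ B) = S \ B := by rw [← inter_sdiff_assoc, inter_eq_left.mpr hSA]
    have hsplit := card_sdiff_add_card_inter S B
    rw [hdata]
    omega
  have htail := card_powersetCard_filter_le_card_inter_le (sdiff_subset (s := A) (t := B))
    (m := ω - r + 1) (by rw [hμ]; exact div_pos (by exact_mod_cast hω0) three_pos)
    (by rw [hμ, hm]; linarith)
  rw [hμ, hm, hA] at htail
  rw [div_lt_iff₀ hC]
  calc (#{S ∈ A.powersetCard ω | #(S ∩ B) < r} : ℝ)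
      ≤ #{S ∈ A.powersetCard ω | ω - r + 1 ≤ #(S ∩ (A \ B))} := by
        exact_mod_cast card_le_card hsub
    _ ≤ (3 * n).choose ω * Real.exp (-((ω - r + 1 - ω / 3) ^ 2 / (ω - r + 1 + ω / 3))) := htail
    _ < Real.exp (-((ω : ℝ) / 3 * (1 - 3 * r / (2 * ω)) ^ 2)) * (3 * n).choose ω := by
      rw [mul_comm]
      exact mul_lt_mul_of_pos_right
        (Real.exp_lt_exp.mpr (neg_lt_neg (threshold_exponent_lt r.cast_nonneg hω1))) hC

/-- Combinatorial core of the security proof of the threshold scheme against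
high-weight Pauli attacks: among `3n` positions of which `2n` hold traps, a
uniformly random `ω`-element subset hits fewer than `r` trap positions with
probability less than `exp(−(ω/3)·(1 − 3r/(2ω))²)`, provided `3r/2 < ω ≤ 3n`. -/
theorem threshold_trap_detection {V : Type*} [DecidableEq V] (n : ℕ) (hn : 1 ≤ n)
    (A B : Finset V) (hA : A.card = 3 * n) (hBA : B ⊆ A) (hB : B.card = 2 * n)
    (r ω : ℕ) (hr : 1 ≤ r) (hω1 : (3 * r : ℝ) / 2 < (ω : ℝ)) (hω2 : ω ≤ 3 * n) :
    (((A.powersetCard ω).filter (fun S => (S ∩ B).card < r)).card : ℝ)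
        / ((3 * n).choose ω : ℝ)
      < Real.exp (-((ω : ℝ) / 3 * (1 - 3 * r / (2 * ω)) ^ 2)) :=
  threshold_trap_detection_general n A B hA hBA hB r ω hω1 hω2
end

section
/- Let n ≥ 1 be a natural number, let A be a finite set of size 3n and B ⊆ A a subset of size 2n. Let r ≥ 1 and ω be integers with 3r ≤ ω ≤ 3n. Then the number of ω-element subsets S of A with |S ∩ B| < r, divided by C(3n, ω), is strictly less than exp(−r/4). -/
/-!
A set `S` with `#(S ∩ B) < r` has at least `m = ω + 1 - r` of its points among the `n` points
of `A \ B`. A union bound over the `m`-subsets of `A \ B` and the identity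
`C(3n, ω) C(ω, m) = C(3n, m) C(3n - m, ω - m)` give
`#bad ≤ C(3n, ω) C(ω, m) C(n, m) / C(3n, m) ≤ C(3n, ω) C(ω, m) / 3^m`, and the single binomial
term `C(ω, m) 2^m ≤ 3^ω` turns this into `#bad / C(3n, ω) ≤ 3^(r-1) / 2^m`. As `ω ≥ 3r` forces
`m ≥ 2r + 1`, the ratio is at most `(3/4)^r / 6 < e^(-r/4)`.
-/

open Finset

namespace Nat

theorem pow_mul_descFactorial_le_descFactorial_mul (k n : ℕ) :
    ∀ m, k ^ m * n.descFactorial m ≤ (k * n).descFactorial m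
  | 0 => by simp
  | m + 1 => by
    have hstep : k * (n - m) ≤ k * n - m := by
      rcases k with _ | k
      · simp
      · rw [Nat.mul_sub]; exact Nat.sub_le_sub_left (Nat.le_mul_of_pos_left m k.succ_pos) _
    rw [descFactorial_succ, descFactorial_succ, pow_succ]
    calc k ^ m * k * ((n - m) * n.descFactorial m)
        = k * (n - m) * (k ^ m * n.descFactorial m) := by ring
      _ ≤ (k * n - m) * (k * n).descFactorial m :=
        Nat.mul_le_mul hstep (pow_mul_descFactorial_le_descFactorial_mul k n m)

theorem pow_mul_choose_le_choose_mul (k n m : ℕ) : k ^ m * n.choose m ≤ (k * n).choose m := by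
  have h := pow_mul_descFactorial_le_descFactorial_mul k n m
  rw [descFactorial_eq_factorial_mul_choose, descFactorial_eq_factorial_mul_choose,
    Nat.mul_left_comm] at h
  exact Nat.le_of_mul_le_mul_left h m.factorial_pos

theorem choose_mul_pow_mul_pow_le_add_pow (a b N k : ℕ) :
    N.choose k * a ^ k * b ^ (N - k) ≤ (a + b) ^ N := by
  rcases lt_or_ge N k with hNk | hkN
  · simp [choose_eq_zero_of_lt hNk]
  rw [add_pow]
  calc N.choose k * a ^ k * b ^ (N - k) = a ^ k * b ^ (N - k) * N.choose k := by ring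
    _ ≤ ∑ j ∈ range (N + 1), a ^ j * b ^ (N - j) * N.choose j :=
      single_le_sum (f := fun j => a ^ j * b ^ (N - j) * N.choose j) (fun _ _ => Nat.zero_le _)
        (mem_range_succ_iff.2 hkN)

end Nat

section Counting

variable {V : Type*} [DecidableEq V]

theorem card_filter_superset_powersetCard_le {A T : Finset V} (hTA : T ⊆ A) (k : ℕ) :
    #{S ∈ A.powersetCard k | T ⊆ S} ≤ (#A - #T).choose (k - #T) := by
  rw [← card_sdiff_of_subset hTA, ← card_powersetCard]
  refine card_le_card_of_injOn (· \ T) (fun S hS => ?_) (fun S₁ hS₁ S₂ hS₂ h => ?_)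
  · obtain ⟨hSk, hTS⟩ := mem_filter.1 hS
    obtain ⟨hSA, rfl⟩ := mem_powersetCard.1 hSk
    exact mem_powersetCard.2 ⟨sdiff_subset_sdiff hSA le_rfl, card_sdiff_of_subset hTS⟩
  · have hT₁ := (mem_filter.1 hS₁).2
    have hT₂ := (mem_filter.1 hS₂).2
    rw [← sdiff_union_of_subset hT₁, ← sdiff_union_of_subset hT₂]
    exact congrArg (· ∪ T) h

theorem card_filter_le_card_sdiff_powersetCard_le (A B : Finset V) (m k : ℕ) :
    #{S ∈ A.powersetCard k | m ≤ #(S \ B)} ≤ (#(A \ B)).choose m * (#A - m).choose (k - m) := by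
  have hcover : {S ∈ A.powersetCard k | m ≤ #(S \ B)} ⊆
      ((A \ B).powersetCard m).biUnion fun T => {S ∈ A.powersetCard k | T ⊆ S} := by
    intro S hS
    obtain ⟨hSk, hm⟩ := mem_filter.1 hS
    obtain ⟨T, hTS, rfl⟩ := exists_subset_card_eq hm
    have hSA := (mem_powersetCard.1 hSk).1
    exact mem_biUnion.2 ⟨T, mem_powersetCard.2 ⟨hTS.trans (sdiff_subset_sdiff hSA le_rfl), rfl⟩,
      mem_filter.2 ⟨hSk, hTS.trans sdiff_subset⟩⟩
  refine (card_le_card hcover).trans ?_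
  rw [← card_powersetCard]
  refine card_biUnion_le_card_mul _ _ _ fun T hT => ?_
  obtain ⟨hTAB, rfl⟩ := mem_powersetCard.1 hT
  exact card_filter_superset_powersetCard_le (hTAB.trans sdiff_subset) k

theorem card_filter_le_card_sdiff_mul_six_pow_le {A B : Finset V} {n m ω : ℕ}
    (hA : #A = 3 * n) (hAB : #(A \ B) = n) (hmω : m ≤ ω) :
    #{S ∈ A.powersetCard ω | m ≤ #(S \ B)} * 6 ^ m ≤ (3 * n).choose ω * 3 ^ ω :=
  calc #{S ∈ A.powersetCard ω | m ≤ #(S \ B)} * 6 ^ m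
      ≤ n.choose m * (3 * n - m).choose (ω - m) * (3 ^ m * 2 ^ m) := by
        rw [← mul_pow, ← hA, ← hAB]
        exact Nat.mul_le_mul_right _ (card_filter_le_card_sdiff_powersetCard_le A B m ω)
    _ = 3 ^ m * n.choose m * (3 * n - m).choose (ω - m) * 2 ^ m := by ring
    _ ≤ (3 * n).choose m * (3 * n - m).choose (ω - m) * 2 ^ m := by
        gcongr; exact Nat.pow_mul_choose_le_choose_mul 3 n m
    _ = (3 * n).choose ω * (ω.choose m * 2 ^ m * 1 ^ (ω - m)) := by
        rw [← Nat.choose_mul hmω]; ring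
    _ ≤ (3 * n).choose ω * 3 ^ ω :=
        Nat.mul_le_mul_left _ (Nat.choose_mul_pow_mul_pow_le_add_pow 2 1 ω m)

theorem card_filter_card_inter_lt_mul_le {A B : Finset V} {n r ω : ℕ} (hA : #A = 3 * n)
    (hBA : B ⊆ A) (hB : #B = 2 * n) (hr : 1 ≤ r) (hω : 3 * r ≤ ω) :
    #{S ∈ A.powersetCard ω | #(S ∩ B) < r} * 6 * 4 ^ r ≤ (3 * n).choose ω * 3 ^ r := by
  set bad := {S ∈ A.powersetCard ω | #(S ∩ B) < r}
  set m := ω + 1 - r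
  have hAB : #(A \ B) = n := by rw [card_sdiff_of_subset hBA]; omega
  have hbad : bad ⊆ {S ∈ A.powersetCard ω | m ≤ #(S \ B)} := by
    refine monotone_filter_right _ fun S hS => ?_
    have := card_inter_add_card_sdiff S B
    have := (mem_powersetCard.1 hS).2
    omega
  have hsix : #bad * 6 ^ m ≤ (3 * n).choose ω * 3 ^ ω :=
    (Nat.mul_le_mul_right _ (card_le_card hbad)).trans
      (card_filter_le_card_sdiff_mul_six_pow_le hA hAB (by omega))
  have htwo : #bad * 2 ^ m ≤ (3 * n).choose ω * 3 ^ (r - 1) := by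
    refine Nat.le_of_mul_le_mul_right ?_ (pow_pos three_pos m)
    calc #bad * 2 ^ m * 3 ^ m = #bad * 6 ^ m := by rw [mul_assoc, ← mul_pow]; norm_num
      _ ≤ (3 * n).choose ω * 3 ^ ω := hsix
      _ = (3 * n).choose ω * 3 ^ (r - 1) * 3 ^ m := by
        rw [mul_assoc, ← pow_add]; congr 2; omega
  calc #bad * 6 * 4 ^ r = #bad * 2 ^ (2 * r + 1) * 3 := by rw [pow_succ, pow_mul]; ring
    _ ≤ #bad * 2 ^ m * 3 := by gcongr <;> omega
    _ ≤ (3 * n).choose ω * 3 ^ (r - 1) * 3 := Nat.mul_le_mul_right 3 htwo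
    _ = (3 * n).choose ω * 3 ^ r := by rw [mul_assoc, ← pow_succ, Nat.sub_add_cancel hr]

end Counting

theorem three_quarters_pow_le_exp (r : ℕ) : (3 / 4 : ℝ) ^ r ≤ Real.exp (-(r : ℝ) / 4) := by
  calc (3 / 4 : ℝ) ^ r ≤ Real.exp (-1 / 4) ^ r := by
        gcongr; linarith [Real.add_one_le_exp (-1 / 4)]
    _ = Real.exp (-(r : ℝ) / 4) := by rw [← Real.exp_nat_mul]; ring_nf

theorem threshold_trap_detection_uniform_general {V : Type*} [DecidableEq V] (n : ℕ)
    (A B : Finset V) (hA : A.card = 3 * n) (hBA : B ⊆ A)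
    (hB : B.card = 2 * n) (r ω : ℕ) (hr : 1 ≤ r) (hω1 : 3 * r ≤ ω)
    (hω2 : ω ≤ 3 * n) :
    (((A.powersetCard ω).filter (fun S => (S ∩ B).card < r)).card : ℝ)
        / ((3 * n).choose ω : ℝ)
      < Real.exp (-(r : ℝ) / 4) := by
  set bad := (A.powersetCard ω).filter (fun S => (S ∩ B).card < r)
  set C := (3 * n).choose ω
  have hC : (0 : ℝ) < C := by exact_mod_cast Nat.choose_pos hω2
  have hcount : (#bad : ℝ) * 6 * 4 ^ r ≤ C * 3 ^ r := by
    exact_mod_cast card_filter_card_inter_lt_mul_le hA hBA hB hr hω1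
  rw [div_lt_iff₀ hC]
  calc (#bad : ℝ) ≤ (3 / 4) ^ r * C / 6 := by
        rw [div_pow, le_div_iff₀ (by norm_num), div_mul_eq_mul_div, le_div_iff₀ (by positivity)]
        linarith
    _ < (3 / 4) ^ r * C := by linarith [mul_pos (pow_pos (by norm_num : (0 : ℝ) < 3 / 4) r) hC]
    _ ≤ Real.exp (-(r : ℝ) / 4) * C := by gcongr; exact three_quarters_pow_le_exp r

/-- Weight-independent trap-detection bound for the threshold scheme: among
`3n` positions of which `2n` hold traps, a uniformly random `ω`-element subset
with `3r ≤ ω ≤ 3n` hits fewer than `r` trap positions with probability less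
than `exp(−r/4)`. -/
theorem threshold_trap_detection_uniform {V : Type*} [DecidableEq V] (n : ℕ)
    (hn : 1 ≤ n) (A B : Finset V) (hA : A.card = 3 * n) (hBA : B ⊆ A)
    (hB : B.card = 2 * n) (r ω : ℕ) (hr : 1 ≤ r) (hω1 : 3 * r ≤ ω)
    (hω2 : ω ≤ 3 * n) :
    (((A.powersetCard ω).filter (fun S => (S ∩ B).card < r)).card : ℝ)
        / ((3 * n).choose ω : ℝ)
      < Real.exp (-(r : ℝ) / 4) :=
  threshold_trap_detection_uniform_general n A B hA hBA hB r ω hr hω1 hω2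
end

section
/- Let n ≥ 1 be a natural number and identify the 3n qubit positions with {0, 1, …, 3n−1}, the first n positions being data positions, the next n positions being computational-basis trap positions (set C), and the last n positions being Hadamard-basis trap positions (set H). Let E ⊆ {0, …, 3n−1} be a set of error positions with |E| = ω ≥ 1, and let ℓ : E → {X, Y, Z} be an arbitrary labeling of the error positions by non-identity Pauli types. Call a permutation π of {0, …, 3n−1} undetecting if for every j ∈ E: π(j) ∈ C implies ℓ(j) = Z, and π(j) ∈ H implies ℓ(j) = X. Then the number of undetecting permutations divided by (3n)! is at most (2/3)^{ω/2}. -/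
/-- Non-identity Pauli types. -/
inductive PauliType : Type
  | X
  | Y
  | Z
  deriving DecidableEq

section Aux

open Finset

/-- Permutations sending every element of `A` into `S` number at most
`S.card ^{\underline{A.card}} \cdot (|α| - |A|)!`. -/
lemma perm_filter_card_le {α : Type*} [Fintype α] [DecidableEq α] (A S : Finset α) :
    (Finset.univ.filter fun π : Equiv.Perm α => ∀ j ∈ A, π j ∈ S).card ≤
      S.card.descFactorial A.card * (Fintype.card α - A.card).factorial := by
  classical
  set T := Finset.univ.filter fun π : Equiv.Perm α => ∀ j ∈ A, π j ∈ S with hTdef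
  set F : Equiv.Perm α → (↥A → α) := fun π j => π j.1 with hFdef
  have hfix : (Finset.univ.filter (fun σ : Equiv.Perm α => ∀ j ∈ A, σ j = j)).card
      = (Fintype.card α - A.card).factorial := by
    have h1 : (Finset.univ.filter (fun σ : Equiv.Perm α => ∀ j ∈ A, σ j = j)).card
        = Fintype.card {σ : Equiv.Perm α // ∀ j ∈ A, σ j = j} :=
      (Fintype.card_subtype _).symm
    have e1 : {σ : Equiv.Perm α // ∀ j ∈ A, σ j = j} ≃ Equiv.Perm {x : α // ¬ x ∈ A} := by
      refine (Equiv.subtypeEquivRight ?_).trans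
        (Equiv.Perm.subtypeEquivSubtypePerm (fun a => ¬ a ∈ A)).symm
      intro σ
      constructor
      · intro h a ha; exact h a (not_not.mp ha)
      · intro h a ha; exact h a (not_not.mpr ha)
    rw [h1, Fintype.card_congr e1, Fintype.card_perm, Fintype.card_subtype_compl,
      Fintype.card_coe]
  have hfib : ∀ g ∈ T.image F,
      (T.filter fun π => F π = g).card ≤ (Fintype.card α - A.card).factorial := by
    intro g hg
    obtain ⟨π₀, hπ₀T, hπ₀⟩ := Finset.mem_image.mp hg
    have hmaps : ∀ π ∈ T.filter fun π => F π = g,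
        (π₀⁻¹ * π) ∈ Finset.univ.filter (fun σ : Equiv.Perm α => ∀ j ∈ A, σ j = j) := by
      intro π hπ
      simp only [Finset.mem_filter, Finset.mem_univ, true_and] at hπ ⊢
      intro j hj
      have h1 : π j = g ⟨j, hj⟩ := congrFun hπ.2 ⟨j, hj⟩
      have h2 : π₀ j = g ⟨j, hj⟩ := congrFun hπ₀ ⟨j, hj⟩
      have : π j = π₀ j := h1.trans h2.symm
      simp [Equiv.Perm.mul_apply, this]
    have hinj : Set.InjOn (fun π => π₀⁻¹ * π) ↑(T.filter fun π => F π = g) := by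
      intro x _ y _ h
      exact mul_left_cancel h
    calc (T.filter fun π => F π = g).card
        ≤ (Finset.univ.filter (fun σ : Equiv.Perm α => ∀ j ∈ A, σ j = j)).card :=
          Finset.card_le_card_of_injOn _ hmaps hinj
      _ = (Fintype.card α - A.card).factorial := hfix
  have himg : (T.image F).card ≤ S.card.descFactorial A.card := by
    have hsub : T.image F ⊆
        Finset.univ.filter (fun g : ↥A → α => Function.Injective g ∧ ∀ j, g j ∈ S) := by
      intro g hg
      obtain ⟨π, hπ, rfl⟩ := Finset.mem_image.mp hg
      simp only [hTdef, Finset.mem_filter, Finset.mem_univ, true_and] at hπ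
      simp only [Finset.mem_filter, Finset.mem_univ, true_and]
      refine ⟨fun j k h => Subtype.ext (π.injective h), fun j => hπ j.1 j.2⟩
    have e2 : {g : ↥A → α // Function.Injective g ∧ ∀ j, g j ∈ S} ≃ (↥A ↪ ↥S) :=
      { toFun := fun g => ⟨fun j => ⟨g.1 j, g.2.2 j⟩,
          fun j k h => g.2.1 (congrArg Subtype.val h)⟩
        invFun := fun e => ⟨fun j => (e j : α),
          ⟨fun j k h => e.injective (Subtype.ext h), fun j => (e j).2⟩⟩
        left_inv := fun g => rfl
        right_inv := fun e => rfl }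
    calc (T.image F).card
        ≤ (Finset.univ.filter
            (fun g : ↥A → α => Function.Injective g ∧ ∀ j, g j ∈ S)).card :=
          Finset.card_le_card hsub
      _ = Fintype.card {g : ↥A → α // Function.Injective g ∧ ∀ j, g j ∈ S} :=
          (Fintype.card_subtype _).symm
      _ = Fintype.card (↥A ↪ ↥S) := Fintype.card_congr e2
      _ = S.card.descFactorial A.card := by
          rw [Fintype.card_embedding_eq, Fintype.card_coe, Fintype.card_coe]
  calc T.card ≤ (Fintype.card α - A.card).factorial * (T.image F).card :=
        Finset.card_le_mul_card_image T _ hfib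
    _ ≤ (Fintype.card α - A.card).factorial * S.card.descFactorial A.card :=
        Nat.mul_le_mul_left _ himg
    _ = S.card.descFactorial A.card * (Fintype.card α - A.card).factorial := mul_comm _ _

lemma desc_fact_bound (s m : ℕ) (hsm : s ≤ m) :
    ∀ a, a ≤ m →
      s.descFactorial a * (m - a).factorial * m ^ a ≤ s ^ a * m.factorial := by
  intro a
  induction a with
  | zero => simp
  | succ a ih =>
    intro ha
    have ha' : a ≤ m := Nat.le_of_succ_le ha
    have key : (s - a) * m ≤ s * (m - a) := by
      rcases le_or_gt s a with h | h
      · simp [Nat.sub_eq_zero_of_le h]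
      · have h1 : a ≤ s := le_of_lt h
        zify [h1, ha']
        nlinarith
    have hfact : (m - a).factorial = (m - a) * (m - (a + 1)).factorial := by
      have hma : m - a = (m - (a + 1)) + 1 := by omega
      rw [hma, Nat.factorial_succ]
    calc s.descFactorial (a + 1) * (m - (a + 1)).factorial * m ^ (a + 1)
        = ((s - a) * m) * (s.descFactorial a * (m - (a + 1)).factorial * m ^ a) := by
          rw [Nat.descFactorial_succ]; ring
      _ ≤ (s * (m - a)) * (s.descFactorial a * (m - (a + 1)).factorial * m ^ a) :=
          Nat.mul_le_mul_right _ key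
      _ = s * (s.descFactorial a * ((m - a) * (m - (a + 1)).factorial) * m ^ a) := by ring
      _ = s * (s.descFactorial a * (m - a).factorial * m ^ a) := by rw [hfact]
      _ ≤ s * (s ^ a * m.factorial) := Nat.mul_le_mul_left _ (ih ha')
      _ = s ^ (a + 1) * m.factorial := by ring

lemma ratio_bound {α : Type*} [Fintype α] [DecidableEq α] (A S : Finset α)
    (hm : 0 < Fintype.card α) (hS : S.card ≤ Fintype.card α)
    (T : Finset (Equiv.Perm α))
    (hT : ∀ π ∈ T, ∀ j ∈ A, π j ∈ S) :
    (T.card : ℝ) / ((Fintype.card α).factorial : ℝ)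
      ≤ ((S.card : ℝ) / (Fintype.card α : ℝ)) ^ A.card := by
  classical
  set m := Fintype.card α with hmdef
  have hA : A.card ≤ m := by
    simpa [hmdef] using Finset.card_le_univ A
  have h1 : T.card ≤ S.card.descFactorial A.card * (m - A.card).factorial :=
    le_trans (Finset.card_le_card (fun π hπ =>
      Finset.mem_filter.mpr ⟨Finset.mem_univ _, hT π hπ⟩)) (perm_filter_card_le A S)
  have h3 : T.card * m ^ A.card ≤ S.card ^ A.card * m.factorial :=
    le_trans (Nat.mul_le_mul_right _ h1) (desc_fact_bound S.card m hS A.card hA)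
  have h3' : (T.card : ℝ) * (m : ℝ) ^ A.card ≤ (S.card : ℝ) ^ A.card * (m.factorial : ℝ) := by
    exact_mod_cast h3
  have hm' : (0 : ℝ) < (m : ℝ) := by exact_mod_cast hm
  have hfact : (0 : ℝ) < (m.factorial : ℝ) := by exact_mod_cast m.factorial_pos
  rw [div_pow, div_le_div_iff₀ hfact (pow_pos hm' _)]
  exact h3'

lemma card_filter_val (M : ℕ) (p : ℕ → Prop) [DecidablePred p] :
    (Finset.univ.filter fun i : Fin M => p (i : ℕ)).card = ((Finset.range M).filter p).card := by
  refine Finset.card_bij (fun i _ => (i : ℕ)) ?_ ?_ ?_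
  · intro i hi
    simp only [Finset.mem_filter, Finset.mem_univ, true_and] at hi
    simp only [Finset.mem_filter, Finset.mem_range]
    exact ⟨i.isLt, hi⟩
  · intro i _ j _ h
    exact Fin.ext h
  · intro v hv
    simp only [Finset.mem_filter, Finset.mem_range] at hv
    exact ⟨⟨v, hv.1⟩, by simp [hv.2], rfl⟩

end Aux

/-- Trap-detection estimate for the trap/threshold codes: identify the `3n`
registers with `Fin (3n)`, the first `n` being data, positions `n ≤ i < 2n`
being computational-basis traps and positions `2n ≤ i` being Hadamard-basis
traps. A weight-`ω` Pauli error with positions `E` and labels `ℓ` evades the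
traps under a permutation `π` iff every error position mapped to a
computational-basis trap carries a `Z` and every error position mapped to a
Hadamard-basis trap carries an `X`; the fraction of such permutations is at
most `(2/3)^(ω/2)`. -/
theorem trap_code_detection (n : ℕ) (hn : 1 ≤ n) (E : Finset (Fin (3 * n)))
    (ω : ℕ) (hE : E.card = ω) (hω : 1 ≤ ω) (ℓ : Fin (3 * n) → PauliType) :
    ((Finset.univ.filter (fun π : Equiv.Perm (Fin (3 * n)) =>
        ∀ j ∈ E,
          ((n ≤ (π j : ℕ) ∧ (π j : ℕ) < 2 * n) → ℓ j = PauliType.Z) ∧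
          (2 * n ≤ (π j : ℕ) → ℓ j = PauliType.X))).card : ℝ)
        / ((3 * n).factorial : ℝ)
      ≤ (2 / 3 : ℝ) ^ ((ω : ℝ) / 2) := by
  classical
  set T := Finset.univ.filter (fun π : Equiv.Perm (Fin (3 * n)) =>
      ∀ j ∈ E,
        ((n ≤ (π j : ℕ) ∧ (π j : ℕ) < 2 * n) → ℓ j = PauliType.Z) ∧
        (2 * n ≤ (π j : ℕ) → ℓ j = PauliType.X)) with hTdef
  set A0 := E.filter (fun j => ℓ j ≠ PauliType.Z) with hA0def
  set B0 := E.filter (fun j => ℓ j ≠ PauliType.X) with hB0def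
  set Sc := Finset.univ.filter (fun i : Fin (3 * n) => ¬ (n ≤ (i : ℕ) ∧ (i : ℕ) < 2 * n))
    with hScdef
  set Sh := Finset.univ.filter (fun i : Fin (3 * n) => (i : ℕ) < 2 * n) with hShdef
  have hm : 0 < Fintype.card (Fin (3 * n)) := by
    rw [Fintype.card_fin]; omega
  have hSc : Sc.card = 2 * n := by
    rw [hScdef, card_filter_val (3 * n) (fun v => ¬ (n ≤ v ∧ v < 2 * n))]
    have heq : (Finset.range (3 * n)).filter (fun v => ¬ (n ≤ v ∧ v < 2 * n))
        = Finset.range n ∪ Finset.Ico (2 * n) (3 * n) := by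
      ext v
      simp only [Finset.mem_filter, Finset.mem_range, Finset.mem_union, Finset.mem_Ico]
      omega
    have hdisj : Disjoint (Finset.range n) (Finset.Ico (2 * n) (3 * n)) := by
      rw [Finset.disjoint_left]
      intro v hv hv'
      simp only [Finset.mem_range] at hv
      simp only [Finset.mem_Ico] at hv'
      omega
    rw [heq, Finset.card_union_of_disjoint hdisj, Finset.card_range, Nat.card_Ico]
    omega
  have hSh : Sh.card = 2 * n := by
    rw [hShdef, card_filter_val (3 * n) (fun v => v < 2 * n)]
    have heq : (Finset.range (3 * n)).filter (fun v => v < 2 * n) = Finset.range (2 * n) := by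
      ext v
      simp only [Finset.mem_filter, Finset.mem_range]
      omega
    rw [heq, Finset.card_range]
  have hTA : ∀ π ∈ T, ∀ j ∈ A0, π j ∈ Sc := by
    intro π hπ
    simp only [hTdef, Finset.mem_filter, Finset.mem_univ, true_and] at hπ
    intro j hj
    rw [hA0def, Finset.mem_filter] at hj
    rw [hScdef, Finset.mem_filter]
    refine ⟨Finset.mem_univ _, fun hcon => hj.2 ((hπ j hj.1).1 hcon)⟩
  have hTB : ∀ π ∈ T, ∀ j ∈ B0, π j ∈ Sh := by
    intro π hπ
    simp only [hTdef, Finset.mem_filter, Finset.mem_univ, true_and] at hπ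
    intro j hj
    rw [hB0def, Finset.mem_filter] at hj
    rw [hShdef, Finset.mem_filter]
    refine ⟨Finset.mem_univ _, ?_⟩
    by_contra hcon
    exact hj.2 ((hπ j hj.1).2 (le_of_not_gt hcon))
  have hq : ((2 * n : ℕ) : ℝ) / ((Fintype.card (Fin (3 * n)) : ℕ) : ℝ) = 2 / 3 := by
    rw [Fintype.card_fin]
    have hn0 : (n : ℝ) ≠ 0 := by
      exact_mod_cast Nat.one_le_iff_ne_zero.mp hn
    push_cast
    field_simp
  have hScle : Sc.card ≤ Fintype.card (Fin (3 * n)) := by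
    rw [hSc, Fintype.card_fin]; omega
  have hShle : Sh.card ≤ Fintype.card (Fin (3 * n)) := by
    rw [hSh, Fintype.card_fin]; omega
  have hr1 : (T.card : ℝ) / ((3 * n).factorial : ℝ) ≤ (2 / 3 : ℝ) ^ A0.card := by
    have h := ratio_bound A0 Sc hm hScle T hTA
    rw [hSc] at h
    rw [hq] at h
    rwa [Fintype.card_fin] at h
  have hr2 : (T.card : ℝ) / ((3 * n).factorial : ℝ) ≤ (2 / 3 : ℝ) ^ B0.card := by
    have h := ratio_bound B0 Sh hm hShle T hTB
    rw [hSh] at h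
    rw [hq] at h
    rwa [Fintype.card_fin] at h
  have hsub : E ⊆ A0 ∪ B0 := by
    intro j hj
    rw [Finset.mem_union, hA0def, hB0def, Finset.mem_filter, Finset.mem_filter]
    rcases h : ℓ j with _ | _ | _
    · exact Or.inl ⟨hj, by simp [h]⟩
    · exact Or.inl ⟨hj, by simp [h]⟩
    · exact Or.inr ⟨hj, by simp [h]⟩
  have hab : ω ≤ A0.card + B0.card := by
    calc ω = E.card := hE.symm
      _ ≤ (A0 ∪ B0).card := Finset.card_le_card hsub
      _ ≤ A0.card + B0.card := Finset.card_union_le _ _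
  set c := max A0.card B0.card with hcdef
  have hc : ω ≤ 2 * c := by
    have h1 : A0.card ≤ c := le_max_left _ _
    have h2 : B0.card ≤ c := le_max_right _ _
    omega
  have hrc : (T.card : ℝ) / ((3 * n).factorial : ℝ) ≤ (2 / 3 : ℝ) ^ c := by
    rcases le_total A0.card B0.card with h | h
    · rw [hcdef, max_eq_right h]; exact hr2
    · rw [hcdef, max_eq_left h]; exact hr1
  have hfinal : (2 / 3 : ℝ) ^ c ≤ (2 / 3 : ℝ) ^ ((ω : ℝ) / 2) := by
    rw [← Real.rpow_natCast (2 / 3 : ℝ) c]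
    apply Real.rpow_le_rpow_of_exponent_ge (by norm_num) (by norm_num)
    have : (ω : ℝ) ≤ 2 * (c : ℝ) := by exact_mod_cast hc
    linarith
  exact le_trans hrc hfinal
end

section
/- For all natural numbers n ≥ 3 and k with 1 ≤ k ≤ n−1, setting p = k/n (so that n·p = k and n·p·(1−p) = k·(n−k)/n), the binomial probability at its mean satisfies C(n,k) · p^k · (1−p)^{n−k} ≥ 9 / (10 · √(2·π·n·p·(1−p))). -/
/-!
Write `n = k + m`. Then `C(n,k) p^k (1-p)^m = n! k^k m^m / (k! m! n^n)`, and Stirling's formula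
with Robbins' error bound, `√(2πj)(j/e)^j ≤ j! ≤ √(2πj)(j/e)^j e^{1/(12j)}`, gives
`C(n,k) p^k (1-p)^m ≥ e^{-1/(12k) - 1/(12m)} / √(2πnp(1-p))`: the powers of `e` and the
powers of `n, k, m` cancel exactly. For `n ≥ 5` the exponent is at least `-5/48` and
`e^{-5/48} ≥ 9/10`; the remaining cases `n ∈ {3, 4}` are checked numerically.
-/

open Real Filter Topology
open scoped Nat

namespace Stirling

theorem monotone_log_stirlingSeq_sub_inv :
    Monotone fun n : ℕ => log (stirlingSeq (n + 1)) - 1 / (12 * (n + 1 : ℝ)) := by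
  refine monotone_nat_of_le_succ fun n => ?_
  have hstep := log_stirlingSeq_sdiff_le (n + 1)
  have htelescope : 1 / (12 * ((n + 1 : ℕ) : ℝ) * ((n + 1 : ℕ) + 1))
      = 1 / (12 * (n + 1 : ℝ)) - 1 / (12 * ((n + 1 : ℕ) + 1 : ℝ)) := by
    push_cast; field_simp; ring
  push_cast at hstep htelescope ⊢
  linarith

theorem stirlingSeq_le_sqrt_pi_mul_exp {n : ℕ} (hn : n ≠ 0) :
    stirlingSeq n ≤ √π * exp (1 / (12 * n)) := by
  obtain ⟨n, rfl⟩ := Nat.exists_eq_succ_of_ne_zero hn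
  have hlim : Tendsto (fun n : ℕ => log (stirlingSeq (n + 1)) - 1 / (12 * (n + 1 : ℝ))) atTop
      (𝓝 (log √π - 0)) := by
    refine ((tendsto_stirlingSeq_sqrt_pi.comp (tendsto_add_atTop_nat 1)).log
      (by positivity)).sub (tendsto_const_nhds.div_atTop ?_)
    exact Tendsto.const_mul_atTop (by norm_num)
      (tendsto_natCast_atTop_atTop.atTop_add tendsto_const_nhds)
  have hle := monotone_log_stirlingSeq_sub_inv.ge_of_tendsto hlim n
  rw [sub_zero, sub_le_iff_le_add, log_le_iff_le_exp (stirlingSeq'_pos n), exp_add,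
    exp_log (by positivity)] at hle
  simpa using hle

noncomputable def stirlingApprox (n : ℕ) : ℝ := √(2 * π * n) * (n / exp 1) ^ n

theorem stirlingApprox_le_factorial (n : ℕ) : stirlingApprox n ≤ n ! :=
  le_factorial_stirling n

theorem factorial_le_stirlingApprox_mul_exp {n : ℕ} (hn : n ≠ 0) :
    (n ! : ℝ) ≤ stirlingApprox n * exp (1 / (12 * n)) := by
  have hpos : 0 < √(2 * n : ℝ) * (n / exp 1) ^ n := by positivity
  have hsqrt : √(2 * π * n) = √π * √(2 * n : ℝ) := by
    rw [← sqrt_mul pi_pos.le]; ring_nf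
  calc (n ! : ℝ) = stirlingSeq n * (√(2 * n : ℝ) * (n / exp 1) ^ n) := by
        rw [stirlingSeq, div_mul_cancel₀ _ hpos.ne']
    _ ≤ √π * exp (1 / (12 * n)) * (√(2 * n : ℝ) * (n / exp 1) ^ n) := by
        gcongr; exact stirlingSeq_le_sqrt_pi_mul_exp hn
    _ = _ := by unfold stirlingApprox; rw [hsqrt]; ring

theorem stirlingApprox_pos {n : ℕ} (hn : n ≠ 0) : 0 < stirlingApprox n := by
  unfold stirlingApprox; positivity

theorem stirlingApprox_add_mul_pow_mul_pow {k m : ℕ} (hk : k ≠ 0) (hm : m ≠ 0) :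
    stirlingApprox (k + m) * (((k : ℝ) / (k + m)) ^ k * ((m : ℝ) / (k + m)) ^ m) *
      √(2 * π * (k + m) * ((k : ℝ) / (k + m)) * ((m : ℝ) / (k + m)))
      = stirlingApprox k * stirlingApprox m := by
  have hK : (0 : ℝ) < k := by positivity
  have hM : (0 : ℝ) < m := by positivity
  have hpow : (((k + m : ℕ) : ℝ) / exp 1) ^ (k + m) *
        (((k : ℝ) / (k + m)) ^ k * ((m : ℝ) / (k + m)) ^ m)
      = ((k : ℝ) / exp 1) ^ k * ((m : ℝ) / exp 1) ^ m := by
    rw [pow_add, mul_mul_mul_comm, ← mul_pow, ← mul_pow]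
    push_cast
    congr 2 <;> field_simp
  have hsqrt : √(2 * π * ((k + m : ℕ) : ℝ)) *
        √(2 * π * (k + m) * ((k : ℝ) / (k + m)) * ((m : ℝ) / (k + m)))
      = √(2 * π * k) * √(2 * π * m) := by
    rw [← sqrt_mul (by positivity), ← sqrt_mul (by positivity)]
    congr 1
    push_cast
    field_simp
  unfold stirlingApprox
  linear_combination
    (√(2 * π * ((k + m : ℕ) : ℝ)) *
        √(2 * π * (k + m) * ((k : ℝ) / (k + m)) * ((m : ℝ) / (k + m)))) * hpow
      + ((k : ℝ) / exp 1) ^ k * ((m : ℝ) / exp 1) ^ m * hsqrt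

theorem exp_neg_div_sqrt_le_choose_mul_pow_mul_pow {n k : ℕ} (hk : k ≠ 0) (hkn : k < n) :
    exp (-(1 / (12 * k) + 1 / (12 * ((n - k : ℕ) : ℝ)))) /
        √(2 * π * n * ((k : ℝ) / n) * (1 - (k : ℝ) / n))
      ≤ (n.choose k : ℝ) * ((k : ℝ) / n) ^ k * (1 - (k : ℝ) / n) ^ (n - k) := by
  obtain ⟨m, rfl⟩ : ∃ m, n = k + m := ⟨n - k, by omega⟩
  have hm : m ≠ 0 := by omega
  have hq : 1 - (k : ℝ) / (k + m) = m / (k + m) := by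
    have : (0 : ℝ) < k + m := by positivity
    field_simp; ring
  rw [Nat.add_sub_cancel_left, Nat.cast_add, hq, Nat.cast_add_choose]
  have hid := stirlingApprox_add_mul_pow_mul_pow hk hm
  set S := √(2 * π * (k + m) * ((k : ℝ) / (k + m)) * ((m : ℝ) / (k + m)))
  set P := ((k : ℝ) / (k + m)) ^ k * ((m : ℝ) / (k + m)) ^ m
  have hP : 0 < P := by positivity
  have hA := stirlingApprox_pos (n := k + m) (by omega)
  have hAk := stirlingApprox_pos hk
  have hAm := stirlingApprox_pos hm
  calc exp (-(1 / (12 * k) + 1 / (12 * (m : ℝ)))) / S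
      = stirlingApprox (k + m) * P /
          (stirlingApprox k * exp (1 / (12 * k)) * (stirlingApprox m * exp (1 / (12 * m)))) := by
        rw [exp_neg, exp_add, mul_mul_mul_comm (stirlingApprox k), ← hid]
        field_simp
    _ ≤ (k + m)! * P / (k ! * m !) := by
        gcongr
        · exact stirlingApprox_le_factorial _
        · exact factorial_le_stirlingApprox_mul_exp hk
        · exact factorial_le_stirlingApprox_mul_exp hm
    _ = _ := by ring

end Stirling

theorem one_div_add_one_div_le_five_div_four {x y : ℝ} (hx : 1 ≤ x) (hy : 1 ≤ y)
    (hxy : 5 ≤ x + y) : 1 / x + 1 / y ≤ 5 / 4 := by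
  rw [div_add_div _ _ (by positivity) (by positivity),
    div_le_div_iff₀ (by positivity) (by norm_num)]
  nlinarith [mul_nonneg (sub_nonneg.2 hx) (sub_nonneg.2 hy)]

theorem exp_five_div_forty_eight_le : exp (5 / 48) ≤ 10 / 9 := by
  have h := exp_bound' (x := 5 / 48) (by norm_num) (by norm_num) (n := 3) (by norm_num)
  norm_num [Finset.sum_range_succ, Nat.factorial] at h
  linarith

theorem div_sqrt_le_of_sq_le_sq_mul {a b c : ℝ} (hb : 0 ≤ b) (ha : 0 < a)
    (h : c ^ 2 ≤ b ^ 2 * a) : c / √a ≤ b := by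
  rw [div_le_iff₀ (sqrt_pos.2 ha), ← sqrt_sq hb, ← sqrt_mul (sq_nonneg b)]
  exact le_sqrt_of_sq_le h

/-- Lower bound on the binomial probability mass at its mean: for
`X ~ B(n, p)` with `p = k/n` integer mean `k`, one has
`P(X = k) ≥ 9 / (10 √(2πnp(1−p)))`. -/
theorem binomial_at_mean_lower_bound (n k : ℕ) (hn : 3 ≤ n)
    (hk1 : 1 ≤ k) (hk2 : k ≤ n - 1) :
    (n.choose k : ℝ) * ((k : ℝ) / n) ^ k * (1 - (k : ℝ) / n) ^ (n - k)
      ≥ 9 / (10 * Real.sqrt (2 * Real.pi * n * ((k : ℝ) / n) * (1 - (k : ℝ) / n))) := by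
  rw [ge_iff_le, ← div_div]
  rcases lt_or_ge n 5 with hsmall | hlarge
  · -- here the Stirling factor drops below `9/10` (e.g. `e^{-1/8}` for `n = 3, k = 1`)
    interval_cases n <;> interval_cases k <;>
      refine div_sqrt_le_of_sq_le_sq_mul (by positivity) (by positivity) ?_ <;>
      norm_num [Nat.choose] <;> nlinarith [pi_gt_d2]
  have hk : (1 : ℝ) ≤ k := by exact_mod_cast hk1
  have hnk : (1 : ℝ) ≤ ((n - k : ℕ) : ℝ) := by exact_mod_cast (by omega : 1 ≤ n - k)
  have hsum : (5 : ℝ) ≤ k + ((n - k : ℕ) : ℝ) := by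
    exact_mod_cast (by omega : 5 ≤ k + (n - k))
  have hexp : 9 / 10 ≤ exp (-(1 / (12 * k) + 1 / (12 * ((n - k : ℕ) : ℝ)))) := by
    have hc : 1 / (12 * k) + 1 / (12 * ((n - k : ℕ) : ℝ)) ≤ 5 / 48 := by
      linarith [one_div_add_one_div_le_five_div_four hk hnk hsum,
        show 1 / (12 * k) + 1 / (12 * ((n - k : ℕ) : ℝ))
          = (1 / k + 1 / ((n - k : ℕ) : ℝ)) / 12 by ring]
    rw [exp_neg, ← one_div, le_div_iff₀ (exp_pos _)]
    linarith [exp_le_exp.2 hc, exp_five_div_forty_eight_le]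
  calc 9 / 10 / √(2 * π * n * ((k : ℝ) / n) * (1 - (k : ℝ) / n)) ≤ _ := by gcongr
    _ ≤ _ := Stirling.exp_neg_div_sqrt_le_choose_mul_pow_mul_pow (by omega) (by omega)
end

section
/- For all natural numbers n ≥ 3 and k with 1 ≤ k ≤ n−1, one has exp(1/(12n+1) − 1/(12k) − 1/(12(n−k))) ≥ 9/10. -/
/-- Correction-factor estimate when applying Robbins' Stirling bounds to the
three factorials of a binomial coefficient: for `n ≥ 3` and `1 ≤ k ≤ n−1`,
`exp(1/(12n+1) − 1/(12k) − 1/(12(n−k))) ≥ 9/10`. -/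
theorem robbins_correction_factor (n k : ℕ) (hn : 3 ≤ n)
    (hk1 : 1 ≤ k) (hk2 : k ≤ n - 1) :
    Real.exp (1 / (12 * (n : ℝ) + 1) - 1 / (12 * (k : ℝ))
        - 1 / (12 * ((n : ℝ) - (k : ℝ)))) ≥ 9 / 10 := by
  have ha : (1:ℝ) ≤ (k:ℝ) := by exact_mod_cast hk1
  have hb : (1:ℝ) ≤ (n:ℝ) - (k:ℝ) := by
    have h : (k:ℝ) + 1 ≤ (n:ℝ) := by exact_mod_cast Nat.succ_le_of_lt (by omega)
    linarith
  have hn' : (3:ℝ) ≤ (n:ℝ) := by exact_mod_cast hn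
  set a : ℝ := (k : ℝ)
  set b : ℝ := (n : ℝ) - (k : ℝ)
  have hnab : (n:ℝ) = a + b := by ring
  have ha0 : (0:ℝ) < a := by linarith
  have hb0 : (0:ℝ) < b := by linarith
  set s : ℝ := (n : ℝ) with hs
  have hs3 : (3:ℝ) ≤ s := hn'
  -- sum of the two negative terms
  have hsum : 1 / (12 * a) + 1 / (12 * b) = (a + b) / (12 * (a * b)) := by
    field_simp; ring
  have hab : a + b - 1 ≤ a * b := by nlinarith
  have h2 : (a + b) / (12 * (a * b)) ≤ (a + b) / (12 * (s - 1)) := by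
    apply div_le_div_of_nonneg_left (by linarith) (by linarith)
    have : s = a + b := hnab
    linarith [this]
  have h3 : s / (12 * (s - 1)) ≤ 1 / 10 + 1 / (12 * s + 1) := by
    have hd1 : (0:ℝ) < 12 * (s - 1) := by linarith
    have hd2 : (0:ℝ) < 12 * s + 1 := by linarith
    rw [div_add_div _ _ (by norm_num) (by linarith), div_le_div_iff₀ hd1 (by positivity)]
    nlinarith [sq_nonneg (s - 3)]
  have key : 1 / (12 * s + 1) - 1 / (12 * a) - 1 / (12 * b) ≥ -(1/10) := by
    have hsab : (a + b) / (12 * (s - 1)) = s / (12 * (s - 1)) := by rw [hnab]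
    have h4 := h2
    rw [hsab] at h4
    linarith [hsum, h4.trans h3]
  calc (9:ℝ)/10 ≤ (1 / (12 * s + 1) - 1 / (12 * a) - 1 / (12 * b)) + 1 := by linarith
    _ ≤ Real.exp _ := Real.add_one_le_exp _
end
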